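/- arXiv:1805.01657 — 2 statements merged into one kernel-verified Lean document; each statement's English description precedes it below -/
import Mathlib

section
/- A standard run of any Heard-Of collection is a run of any Delivered predicate that contains the total Delivered collection (the collection where every process's Delivered set at every round is the full set of processes Π). -/
open Classical

/-- A collection (Delivered or Heard-Of): for each round `r > 0` and process `j`,
the set of processes from which `j` receives (resp. hears of) the round-`r` message. -/
abbrev Collection (n : ℕ) := ℕ → Fin n → Finset (Fin n)

abbrev DeliveredPred (n : ℕ) := Set (Collection n)

/-- The total collection: every Delivered set is all of `Π`. -/
def totalCollection (n : ℕ) : Collection n := fun _ _ => Finset.univ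

/-- Local state of a process: its current round and the set of
(round, sender) pairs of delivered messages. -/
structure ProcState (n : ℕ) where
  round : ℕ
  received : Set (ℕ × Fin n)

/-- A strategy: the set of local states in which a process may change round. -/
abbrev Strategy (n : ℕ) := Set (ProcState n)

inductive Transition (n : ℕ) where
  | next (j : Fin n)
  | deliver (r : ℕ) (k j : Fin n)
  | fin

/-- Effect of a transition on a global state. -/
def applyTr {n : ℕ} (τ : Transition n) (s : Fin n → ProcState n) : Fin n → ProcState n :=
  match τ with
  | .next j => Function.update s j ⟨(s j).round + 1, (s j).received⟩
  | .deliver r k j => Function.update s j ⟨(s j).round, insert (r, k) (s j).received⟩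
  | .fin => s

def initState (n : ℕ) : Fin n → ProcState n := fun _ => ⟨1, ∅⟩

def stFromTr {n : ℕ} (tr : ℕ → Transition n) : ℕ → Fin n → ProcState n
  | 0 => initState n
  | i + 1 => applyTr (tr i) (stFromTr tr i)

/-- A (finite or infinite) run: a length in `ℕ∞`, the global state before each step,
and the transition taken at each step. -/
structure Run (n : ℕ) where
  len : ℕ∞
  st : ℕ → Fin n → ProcState n
  tr : ℕ → Transition n

namespace Run
variable {n : ℕ}

def inRange (t : Run n) (i : ℕ) : Prop := (i : ℕ∞) < t.len

/-- `t` is a run: initial state, transition semantics, `end` only as last step,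
delivery after sending, unique delivery. -/
def IsRun (t : Run n) : Prop :=
  (∀ j, t.st 0 j = ⟨1, ∅⟩) ∧
  (∀ i, t.inRange i → t.st (i + 1) = applyTr (t.tr i) (t.st i)) ∧
  (∀ i, t.inRange i → t.tr i = Transition.fin → (i : ℕ∞) + 1 = t.len) ∧
  (∀ i, t.inRange i → ∀ r k j, t.tr i = Transition.deliver r k j → r ≤ (t.st i k).round) ∧
  (∀ r k j i i', t.inRange i → t.inRange i' → t.tr i = Transition.deliver r k j →
      t.tr i' = Transition.deliver r k j → i = i')

/-- `t` is a run of the Delivered collection `CDel`: the message `(r,k)` is delivered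
to `j` iff `k ∈ CDel r j` and `j` eventually reaches round `r`. -/
def RunOf (t : Run n) (CDel : Collection n) : Prop :=
  t.IsRun ∧
  ∀ r k j, 0 < r →
    ((k ∈ CDel r j ∧ ∃ i, t.inRange i ∧ r ≤ (t.st i j).round) ↔
      ∃ i, t.inRange i ∧ t.tr i = Transition.deliver r k j)

def RunOfPred (t : Run n) (PDel : DeliveredPred n) : Prop :=
  ∃ CDel ∈ PDel, t.RunOf CDel

/-- A run is valid when every process changes round infinitely often. -/
def Valid (t : Run n) : Prop :=
  ∀ j, {i | t.inRange i ∧ t.tr i = Transition.next j}.Infinite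

/-- A run generated by a strategy `f`: next only if allowed, plus the fairness conditions. -/
def GeneratedBy (t : Run n) (f : Strategy n) : Prop :=
  (∀ i, t.inRange i → ∀ j, t.tr i = Transition.next j → t.st i j ∈ f) ∧
  (t.len = ⊤ → ∀ j, {i | t.tr i = Transition.next j}.Finite →
      {i | t.st i j ∉ f}.Infinite) ∧
  (∀ L : ℕ, t.len = (L : ℕ∞) → ∀ j, t.st (L - 1) j ∉ f)

end Run

def runsGen {n : ℕ} (f : Strategy n) (PDel : DeliveredPred n) : Set (Run n) :=
  {t | t.GeneratedBy f ∧ t.RunOfPred PDel}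

/-- A strategy is valid for a Delivered predicate when all its generated runs are valid. -/
def Strategy.ValidFor {n : ℕ} (f : Strategy n) (PDel : DeliveredPred n) : Prop :=
  ∀ t ∈ runsGen f PDel, t.Valid

/-- The Heard-Of collection of a run: `k ∈ CHO t r j` iff `j` had received the round-`r`
message of `k` when it performed `next` at round `r`. -/
noncomputable def CHO {n : ℕ} (t : Run n) : Collection n := fun r j =>
  (Set.toFinite {k | ∃ i, t.inRange i ∧ t.tr i = Transition.next j ∧
    (t.st i j).round = r ∧ (r, k) ∈ (t.st i j).received}).toFinset

/-- The Heard-Of predicate generated by a strategy on a Delivered predicate. -/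
noncomputable def PHO {n : ℕ} (f : Strategy n) (PDel : DeliveredPred n) : Set (Collection n) :=
  {c | ∃ t, t ∈ runsGen f PDel ∧ t.Valid ∧ CHO t = c}

/- Standard run of a Heard-Of collection. -/

noncomputable def lateList {n : ℕ} (cho : Collection n) (r : ℕ) : List (Transition n) :=
  if r ≤ 1 then [] else
    (List.finRange n).flatMap fun j =>
      ((Finset.univ \ cho (r - 1) j).toList).map fun k => Transition.deliver (r - 1) k j

noncomputable def onTimeList {n : ℕ} (cho : Collection n) (r : ℕ) : List (Transition n) :=
  (List.finRange n).flatMap fun j => ((cho r j).toList).map fun k => Transition.deliver r k j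

def nextsList (n : ℕ) : List (Transition n) := (List.finRange n).map Transition.next

noncomputable def stdBlock {n : ℕ} (cho : Collection n) (r : ℕ) : List (Transition n) :=
  lateList cho r ++ onTimeList cho r ++ nextsList n

noncomputable def stdTr {n : ℕ} (cho : Collection n) (i : ℕ) : Transition n :=
  (((List.range (i + 1)).map fun m => stdBlock cho (m + 1)).flatten).getD i Transition.fin

/-- The standard run of a Heard-Of collection: at each round, late messages,
then on-time messages, then all `next`s, in lockstep. -/
noncomputable def standardRun {n : ℕ} (cho : Collection n) : Run n :=
  ⟨⊤, stFromTr (stdTr cho), stdTr cho⟩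

/- Earliest run of a strategy for a Delivered collection. -/

noncomputable def eDels {n : ℕ} (CDel : Collection n) (s : Fin n → ProcState n) :
    List (Transition n) :=
  (List.finRange n).flatMap fun j =>
    (((CDel (s j).round j).toList).filter fun k =>
        decide (((s j).round, k) ∉ (s j).received)).map
      fun k => Transition.deliver (s j).round k j

noncomputable def eStep {n : ℕ} (CDel : Collection n) (f : Strategy n)
    (s : Fin n → ProcState n) : List (Transition n) × (Fin n → ProcState n) :=
  let dl := eDels CDel s
  let s' := dl.foldl (fun st τ => applyTr τ st) s
  let nx := ((List.finRange n).filter fun j => decide (s' j ∈ f)).map Transition.next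
  let s'' := nx.foldl (fun st τ => applyTr τ st) s'
  (dl ++ nx, s'')

noncomputable def eIter {n : ℕ} (CDel : Collection n) (f : Strategy n) :
    ℕ → Fin n → ProcState n
  | 0 => initState n
  | r + 1 => (eStep CDel f (eIter CDel f r)).2

noncomputable def eBlock {n : ℕ} (CDel : Collection n) (f : Strategy n) (r : ℕ) :
    List (Transition n) :=
  (eStep CDel f (eIter CDel f r)).1

noncomputable def eTr {n : ℕ} (CDel : Collection n) (f : Strategy n) (i : ℕ) : Transition n :=
  (((List.range (i + 1)).map (eBlock CDel f)).flatten).getD i Transition.fin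

noncomputable def eLen {n : ℕ} (CDel : Collection n) (f : Strategy n) : ℕ∞ :=
  if (⨆ R : ℕ, (((List.range R).map (eBlock CDel f)).flatten.length : ℕ∞)) = ⊤ then ⊤
  else (⨆ R : ℕ, (((List.range R).map (eBlock CDel f)).flatten.length : ℕ∞)) + 1

/-- The earliest run of strategy `f` for Delivered collection `CDel`: in each iteration all
not-yet-delivered messages of current rounds are delivered, then all allowed processes
change round; ends with `end` if no process can ever change round again. -/
noncomputable def earliestRun {n : ℕ} (CDel : Collection n) (f : Strategy n) : Run n :=
  ⟨eLen CDel f, stFromTr (eTr CDel f), eTr CDel f⟩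

/- Carefree and reactionary strategies, and the particular predicates studied. -/

/-- Senders of current-round messages received. -/
def cfree {n : ℕ} (q : ProcState n) : Set (Fin n) := {k | (q.round, k) ∈ q.received}

def Carefree {n : ℕ} (f : Strategy n) : Prop :=
  ∀ q q' : ProcState n, cfree q = cfree q' → (q ∈ f ↔ q' ∈ f)

def Nexts {n : ℕ} (f : Strategy n) : Set (Set (Fin n)) := {s | ∃ q ∈ f, cfree q = s}

/-- The strategy waiting for at least `n - F` current-round messages. -/
def fThresh (n F : ℕ) : Strategy n := {q | n - F ≤ (cfree q).ncard}

/-- The kernel of round `r`. -/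
def kernelC {n : ℕ} (CDel : Collection n) (r : ℕ) : Finset (Fin n) :=
  Finset.univ.inf (CDel r)

/-- Delivered predicate of the asynchronous model with reliable communication and
at most `F` permanent crashes. -/
def PDelF (n F : ℕ) : DeliveredPred n :=
  {CDel | ∀ r, 0 < r → ∀ j, n - F ≤ (CDel r j).card ∧ CDel (r + 1) j ⊆ kernelC CDel r}

/-- The carefree strategy whose `Nexts` is the set of all Delivered sets of `PDel`. -/
def cfDom {n : ℕ} (PDel : DeliveredPred n) : Strategy n :=
  {q | ∃ CDel ∈ PDel, ∃ r, 0 < r ∧ ∃ j, cfree q = ↑(CDel r j)}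

def DeliveredSets {n : ℕ} (PDel : DeliveredPred n) : Set (Finset (Fin n)) :=
  {D | ∃ CDel ∈ PDel, ∃ r, 0 < r ∧ ∃ j, CDel r j = D}

def RoundSymmetric {n : ℕ} (PDel : DeliveredPred n) : Prop :=
  totalCollection n ∈ PDel ∧
  ∀ D ∈ DeliveredSets PDel, ∀ r, 0 < r →
    ∃ CDel ∈ PDel, ∀ j, (∀ r', 0 < r' → r' < r → CDel r' j = Finset.univ) ∧ CDel r j = D

/-- Delivered predicate for at most `B` failed broadcasts per round. -/
def PDelB (n B : ℕ) : DeliveredPred n :=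
  {CDel | ∀ r, 0 < r → ∀ j, CDel r j = kernelC CDel r ∧ n - B ≤ (kernelC CDel r).card}

/-- Round and past-and-present received messages. -/
def reac {n : ℕ} (q : ProcState n) : ℕ × Set (ℕ × Fin n) :=
  (q.round, {p ∈ q.received | p.1 ≤ q.round})

def Reactionary {n : ℕ} (f : Strategy n) : Prop :=
  ∀ q q' : ProcState n, reac q = reac q' → (q ∈ f ↔ q' ∈ f)

def NextsR {n : ℕ} (f : Strategy n) : Set (ℕ × Set (ℕ × Fin n)) := {p | ∃ q ∈ f, reac q = p}

/-- The full past-and-present received set at round `r` of process `j` in `CDel`. -/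
def pastSet {n : ℕ} (CDel : Collection n) (r : ℕ) (j : Fin n) : Set (ℕ × Fin n) :=
  {p | 0 < p.1 ∧ p.1 ≤ r ∧ p.2 ∈ CDel p.1 j}

/-- The reactionary strategy whose `Nexts^R` is the set of all past-and-present
pairs of `PDel`. -/
def rcDom {n : ℕ} (PDel : DeliveredPred n) : Strategy n :=
  {q | ∃ CDel ∈ PDel, ∃ r, 0 < r ∧ ∃ j, reac q = (r, pastSet CDel r j)}

/-- Delivered predicate for at most `F` initial crashes. -/
def PDelIni (n F : ℕ) : DeliveredPred n :=
  {CDel | ∃ S : Finset (Fin n), n - F ≤ S.card ∧ ∀ r, 0 < r → ∀ j, CDel r j = S}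

/-- The past-complete strategy. -/
def fpc (n F : ℕ) : Strategy n :=
  {q | 0 < q.round ∧ ∃ S : Finset (Fin n), n - F ≤ S.card ∧
    {p ∈ q.received | p.1 ≤ q.round} =
      {p : ℕ × Fin n | 1 ≤ p.1 ∧ p.1 ≤ q.round ∧ p.2 ∈ S}}

/-! The transitions of the standard run are the concatenation of the blocks
`stdBlock cho 1, stdBlock cho 2, …`. Every block contains `next j` for each process `j`, so it is
nonempty (the run never ends) and after the first `R` blocks every process is past round `R`.
Every block is duplicate-free, and the message `(r, k)` to `j` lies in exactly one block, that
of round `r` (on time) or `r + 1` (late), after its sender has reached round `r`. So the standard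
run is a run of the total collection. -/

section BlockPrefix

variable {α : Type*} (B : ℕ → List α)

def blockPrefix (R : ℕ) : List α := ((List.range R).map B).flatten

theorem blockPrefix_succ (R : ℕ) : blockPrefix B (R + 1) = blockPrefix B R ++ B R := by
  simp [blockPrefix, List.range_succ]

theorem length_blockPrefix_succ (R : ℕ) :
    (blockPrefix B (R + 1)).length = (blockPrefix B R).length + (B R).length := by
  rw [blockPrefix_succ, List.length_append]

theorem blockPrefix_isPrefix {R R' : ℕ} (h : R ≤ R') : blockPrefix B R <+: blockPrefix B R' := by
  induction R', h using Nat.le_induction with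
  | base => exact List.prefix_refl _
  | succ R' _ ih => exact ih.trans (blockPrefix_succ B R' ▸ List.prefix_append _ _)

variable {B}

theorem le_length_blockPrefix (hB : ∀ m, B m ≠ []) (R : ℕ) : R ≤ (blockPrefix B R).length := by
  induction R with
  | zero => exact Nat.zero_le _
  | succ R ih =>
    have := List.length_pos_iff.2 (hB R)
    rw [length_blockPrefix_succ]
    omega

theorem exists_mem_block_of_lt_length {i R' : ℕ} (h : i < (blockPrefix B R').length) :
    ∃ R d, d < (B R).length ∧ i = (blockPrefix B R).length + d := by
  induction R' with
  | zero => simp [blockPrefix] at h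
  | succ R' ih =>
    by_cases hi : i < (blockPrefix B R').length
    · exact ih hi
    · rw [length_blockPrefix_succ] at h
      exact ⟨R', i - (blockPrefix B R').length, by omega, by omega⟩

theorem getD_blockPrefix_eq_getElem (hB : ∀ m, B m ≠ []) (x : α) {R i : ℕ}
    (h : i < (blockPrefix B R).length) :
    (blockPrefix B (i + 1)).getD i x = (blockPrefix B R)[i] := by
  have hi : i < (blockPrefix B (i + 1)).length := le_length_blockPrefix hB (i + 1)
  rw [List.getD_eq_getElem _ _ hi]
  rcases le_total (i + 1) R with hR | hR
  · exact (blockPrefix_isPrefix B hR).getElem hi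
  · exact ((blockPrefix_isPrefix B hR).getElem h).symm

theorem getD_blockPrefix_length_add (hB : ∀ m, B m ≠ []) (x : α) {R d : ℕ}
    (hd : d < (B R).length) :
    (blockPrefix B ((blockPrefix B R).length + d + 1)).getD ((blockPrefix B R).length + d) x
      = (B R)[d] := by
  have h : (blockPrefix B R).length + d < (blockPrefix B (R + 1)).length := by
    rw [length_blockPrefix_succ]; omega
  rw [getD_blockPrefix_eq_getElem hB x h]
  simp only [blockPrefix_succ, List.getElem_append_right (Nat.le_add_right _ d),
    Nat.add_sub_cancel_left]

end BlockPrefix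

section StandardRun

variable {n : ℕ}

theorem round_stFromTr_le_succ (tr : ℕ → Transition n) (i : ℕ) (j : Fin n) :
    (stFromTr tr i j).round ≤ (stFromTr tr (i + 1) j).round := by
  simp only [stFromTr]
  cases tr i with
  | fin => exact le_rfl
  | next _ | deliver _ _ _ =>
    simp only [applyTr, Function.update_apply]
    split_ifs <;> simp_all

theorem monotone_round_stFromTr (tr : ℕ → Transition n) (j : Fin n) :
    Monotone fun i => (stFromTr tr i j).round :=
  monotone_nat_of_le_succ fun i => round_stFromTr_le_succ tr i j

theorem round_stFromTr_succ_of_eq_next {tr : ℕ → Transition n} {i : ℕ} {j : Fin n}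
    (h : tr i = Transition.next j) :
    (stFromTr tr (i + 1) j).round = (stFromTr tr i j).round + 1 := by
  simp [stFromTr, h, applyTr]


noncomputable def deliveryList (r : ℕ) (S : Fin n → Finset (Fin n)) : List (Transition n) :=
  (List.finRange n).flatMap fun j => (S j).toList.map fun k => Transition.deliver r k j

theorem mem_deliveryList {r : ℕ} {S : Fin n → Finset (Fin n)} {τ : Transition n} :
    τ ∈ deliveryList r S ↔ ∃ j, ∃ k ∈ S j, τ = Transition.deliver r k j := by
  simp [deliveryList, eq_comm]

theorem nodup_deliveryList (r : ℕ) (S : Fin n → Finset (Fin n)) : (deliveryList r S).Nodup := by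
  refine List.nodup_flatMap.2 ⟨fun j _ => (Finset.nodup_toList _).map fun _ _ h => ?_,
    (List.nodup_finRange n).imp fun hne => ?_⟩
  · injection h
  · simpa [Function.onFun, List.disjoint_left] using fun _ _ _ _ _ h => hne h.symm

theorem lateList_eq (cho : Collection n) {ρ : ℕ} (hρ : 2 ≤ ρ) :
    lateList cho ρ = deliveryList (ρ - 1) fun j => Finset.univ \ cho (ρ - 1) j :=
  if_neg (by omega)

theorem onTimeList_eq (cho : Collection n) (ρ : ℕ) : onTimeList cho ρ = deliveryList ρ (cho ρ) :=
  rfl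

theorem mem_lateList {cho : Collection n} {ρ : ℕ} {τ : Transition n} :
    τ ∈ lateList cho ρ ↔
      2 ≤ ρ ∧ ∃ j, ∃ k ∉ cho (ρ - 1) j, τ = Transition.deliver (ρ - 1) k j := by
  by_cases hρ : 2 ≤ ρ
  · simp [lateList_eq cho hρ, mem_deliveryList, hρ]
  · simp [lateList, show ρ ≤ 1 by omega, hρ]

theorem mem_nextsList {τ : Transition n} : τ ∈ nextsList n ↔ ∃ j, τ = Transition.next j := by
  simp [nextsList, eq_comm]

theorem nodup_lateList (cho : Collection n) (ρ : ℕ) : (lateList cho ρ).Nodup := by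
  by_cases hρ : 2 ≤ ρ
  · exact lateList_eq cho hρ ▸ nodup_deliveryList _ _
  · simp [lateList, show ρ ≤ 1 by omega]

/-- The round whose block in the standard run delivers the message `(r, k)` to `j`. -/
def deliveryRound (cho : Collection n) (r : ℕ) (k j : Fin n) : ℕ :=
  if k ∈ cho r j then r else r + 1

theorem deliver_mem_stdBlock_succ {cho : Collection n} {R r : ℕ} {k j : Fin n} :
    Transition.deliver r k j ∈ stdBlock cho (R + 1) ↔ 0 < r ∧ R + 1 = deliveryRound cho r k j := by
  simp only [stdBlock, onTimeList_eq, deliveryRound, List.mem_append, mem_lateList,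
    mem_deliveryList, mem_nextsList]
  grind

theorem next_mem_stdBlock (cho : Collection n) (ρ : ℕ) (j : Fin n) :
    Transition.next j ∈ stdBlock cho ρ := by
  simp [stdBlock, mem_nextsList]

theorem fin_not_mem_stdBlock (cho : Collection n) (ρ : ℕ) : Transition.fin ∉ stdBlock cho ρ := by
  simp [stdBlock, mem_lateList, onTimeList_eq, mem_deliveryList, mem_nextsList]

theorem nodup_stdBlock (cho : Collection n) (ρ : ℕ) : (stdBlock cho ρ).Nodup := by
  refine List.nodup_append.2 ⟨List.nodup_append.2 ⟨nodup_lateList cho ρ,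
    nodup_deliveryList _ _, ?_⟩, (List.nodup_finRange n).map fun _ _ h => by injection h, ?_⟩
  all_goals
    simp only [List.mem_append, mem_lateList, onTimeList_eq, mem_deliveryList, mem_nextsList]
    grind

theorem stdBlock_ne_nil (hn : 0 < n) (cho : Collection n) (ρ : ℕ) : stdBlock cho ρ ≠ [] :=
  List.ne_nil_of_mem (next_mem_stdBlock cho ρ ⟨0, hn⟩)

/-- Index in the standard run of the first transition of round `R + 1`. -/
noncomputable def stdBlockStart (cho : Collection n) (R : ℕ) : ℕ :=
  (blockPrefix (fun m => stdBlock cho (m + 1)) R).length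

theorem stdBlockStart_succ (cho : Collection n) (R : ℕ) :
    stdBlockStart cho (R + 1) = stdBlockStart cho R + (stdBlock cho (R + 1)).length :=
  length_blockPrefix_succ _ R

-- `stdTr cho i` unfolds to `(blockPrefix (fun m => stdBlock cho (m + 1)) (i + 1)).getD i .fin`.
theorem stdTr_stdBlockStart_add (hn : 0 < n) (cho : Collection n) {R d : ℕ}
    (hd : d < (stdBlock cho (R + 1)).length) :
    stdTr cho (stdBlockStart cho R + d) = (stdBlock cho (R + 1))[d] :=
  getD_blockPrefix_length_add (fun m => stdBlock_ne_nil hn cho (m + 1)) _ hd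

theorem exists_stdTr_eq_getElem (hn : 0 < n) (cho : Collection n) (i : ℕ) :
    ∃ R d, ∃ hd : d < (stdBlock cho (R + 1)).length,
      i = stdBlockStart cho R + d ∧ stdTr cho i = (stdBlock cho (R + 1))[d] := by
  obtain ⟨R, d, hd, rfl⟩ := exists_mem_block_of_lt_length
    (le_length_blockPrefix (fun m => stdBlock_ne_nil hn cho (m + 1)) (i + 1))
  exact ⟨R, d, hd, rfl, stdTr_stdBlockStart_add hn cho hd⟩

theorem exists_stdTr_eq_deliver (hn : 0 < n) (cho : Collection n) {r : ℕ} (hr : 0 < r)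
    (k j : Fin n) : ∃ i, stdTr cho i = Transition.deliver r k j := by
  have hmem : Transition.deliver r k j ∈ stdBlock cho (deliveryRound cho r k j - 1 + 1) :=
    deliver_mem_stdBlock_succ.2 ⟨hr, by unfold deliveryRound; split_ifs <;> omega⟩
  obtain ⟨d, hd, h⟩ := List.getElem_of_mem hmem
  exact ⟨_, (stdTr_stdBlockStart_add hn cho hd).trans h⟩

theorem stdTr_ne_fin (hn : 0 < n) (cho : Collection n) (i : ℕ) : stdTr cho i ≠ Transition.fin := by
  obtain ⟨R, d, hd, -, h⟩ := exists_stdTr_eq_getElem hn cho i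
  exact fun hfin => fin_not_mem_stdBlock cho (R + 1) (hfin ▸ h ▸ List.getElem_mem hd)

theorem stdTr_eq_deliver_inj (hn : 0 < n) {cho : Collection n} {r : ℕ} {k j : Fin n} {i i' : ℕ}
    (h : stdTr cho i = Transition.deliver r k j) (h' : stdTr cho i' = Transition.deliver r k j) :
    i = i' := by
  obtain ⟨R, d, hd, rfl, hR⟩ := exists_stdTr_eq_getElem hn cho i
  obtain ⟨R', d', hd', rfl, hR'⟩ := exists_stdTr_eq_getElem hn cho i'
  obtain rfl : R = R' := by
    have := deliver_mem_stdBlock_succ.1 (h ▸ hR ▸ List.getElem_mem hd)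
    have := deliver_mem_stdBlock_succ.1 (h' ▸ hR' ▸ List.getElem_mem hd')
    omega
  rw [(nodup_stdBlock cho (R + 1)).getElem_inj_iff.1 (hR.symm.trans (h.trans (h'.symm.trans hR')))]

theorem lt_round_stdBlockStart (hn : 0 < n) (cho : Collection n) (R : ℕ) (j : Fin n) :
    R < (stFromTr (stdTr cho) (stdBlockStart cho R) j).round := by
  induction R with
  | zero => exact Nat.zero_lt_one
  | succ R ih =>
    obtain ⟨d, hd, hnext⟩ := List.getElem_of_mem (next_mem_stdBlock cho (R + 1) j)
    have hmono := monotone_round_stFromTr (stdTr cho) j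
    calc R + 1 < (stFromTr (stdTr cho) (stdBlockStart cho R + d) j).round + 1 :=
          Nat.succ_lt_succ (ih.trans_le (hmono (Nat.le_add_right _ d)))
      _ = (stFromTr (stdTr cho) (stdBlockStart cho R + d + 1) j).round :=
          (round_stFromTr_succ_of_eq_next ((stdTr_stdBlockStart_add hn cho hd).trans hnext)).symm
      _ ≤ _ := hmono (by rw [stdBlockStart_succ]; omega)

theorem le_round_of_stdTr_eq_deliver (hn : 0 < n) {cho : Collection n} {i r : ℕ} {k j : Fin n}
    (h : stdTr cho i = Transition.deliver r k j) : r ≤ (stFromTr (stdTr cho) i k).round := by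
  obtain ⟨R, d, hd, rfl, hR⟩ := exists_stdTr_eq_getElem hn cho i
  have hr := (deliver_mem_stdBlock_succ.1 (h ▸ hR ▸ List.getElem_mem hd)).2
  have hround : R < (stFromTr (stdTr cho) (stdBlockStart cho R + d) k).round :=
    (lt_round_stdBlockStart hn cho R k).trans_le
      (monotone_round_stFromTr (stdTr cho) k (Nat.le_add_right _ d))
  unfold deliveryRound at hr
  split_ifs at hr <;> omega

end StandardRun

/-- A standard run of any Heard-Of collection is a run of any Delivered
predicate that contains the total Delivered collection. -/
theorem standardRun_runOfPred {n : ℕ} (hn : 0 < n) (cho : Collection n)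
    (PDel : DeliveredPred n) (htot : totalCollection n ∈ PDel) :
    (standardRun cho).RunOfPred PDel := by
  have inRange (i : ℕ) : (standardRun cho).inRange i := WithTop.coe_lt_top i
  refine ⟨totalCollection n, htot,
    ⟨fun _ => rfl, fun _ _ => rfl, fun i _ hfin => absurd hfin (stdTr_ne_fin hn cho i),
      fun _ _ _ _ _ h => le_round_of_stdTr_eq_deliver hn h,
      fun _ _ _ _ _ _ _ h h' => stdTr_eq_deliver_inj hn h h'⟩,
    fun r k j hr => ⟨fun _ => ?_, fun _ => ?_⟩⟩
  · obtain ⟨i, hi⟩ := exists_stdTr_eq_deliver hn cho hr k j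
    exact ⟨i, inRange i, hi⟩
  · exact ⟨Finset.mem_univ k, stdBlockStart cho r, inRange _,
      (lt_round_stdBlockStart hn cho r j).le⟩
end

section
/- If two strategies f and f′ satisfy f ⊆ f′ (as subsets of the state space Q) and both are valid for a Delivered predicate PDel, then every run generated by f on PDel is also a run generated by f′ on PDel, i.e., runs_f(PDel) ⊆ runs_{f′}(PDel); consequently PHO_f(PDel) ⊆ PHO_{f′}(PDel), that is, f dominates f′ (f′ ≺ f). -/
open Classical

/-- If `f ⊆ f'` and both are valid for `PDel`, then every run generated by
`f` on `PDel` is generated by `f'`, hence `PHO_f(PDel) ⊆ PHO_{f'}(PDel)` (so `f' ≺ f`). -/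
theorem subset_strategy_dominates {n : ℕ} (hn : 0 < n) (PDel : DeliveredPred n)
    (f f' : Strategy n) (hsub : f ⊆ f') (hf : f.ValidFor PDel) (hf' : f'.ValidFor PDel) :
    runsGen f PDel ⊆ runsGen f' PDel ∧ PHO f PDel ⊆ PHO f' PDel := by
  have hruns : runsGen f PDel ⊆ runsGen f' PDel := by
    intro t ht
    obtain ⟨⟨hnext, _, _⟩, hpred⟩ := ht
    have hvalid : t.Valid := hf t ⟨⟨hnext, ‹_›, ‹_›⟩, hpred⟩
    refine ⟨⟨fun i hi j hj => hsub (hnext i hi j hj), ?_, ?_⟩, hpred⟩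
    · intro htop j hfin
      exact absurd (hfin.subset (fun i hi => hi.2)) (hvalid j)
    · intro L hL j
      have : {i | t.inRange i ∧ t.tr i = Transition.next j}.Finite := by
        apply (Set.finite_Iio L).subset
        intro i hi
        have := hi.1
        simp only [Run.inRange, hL, Nat.cast_lt] at this
        exact this
      exact absurd this (hvalid j)
  refine ⟨hruns, ?_⟩
  rintro c ⟨t, ht, hv, hc⟩
  exact ⟨t, hruns ht, hv, hc⟩
end
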